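/- For integers n₁, n₂ ≥ 1, 0 ≤ w₁ ≤ n₁, 0 ≤ w₂ ≤ n₂ and d ≥ 1, A(n₁+n₂, d, w₁+w₂) · C(n₁,w₁) · C(n₂,w₂) ≤ C(n₁+n₂, w₁+w₂) · T(w₁,n₁,w₂,n₂,d), where C(a,b) denotes the binomial coefficient. -/

import Mathlib

/-- The weight of a binary word: the number of its nonzero entries. -/
def wt {n : ℕ} (x : Fin n → Bool) : ℕ :=
  (Finset.univ.filter (fun i => x i = true)).card

/-- `Acw n d w` is the maximum size of a binary code of length `n`, constant weight `w`,
and minimum Hamming distance at least `d`. -/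
noncomputable def Acw (n d w : ℕ) : ℕ :=
  sSup {m | ∃ C : Finset (Fin n → Bool), C.card = m ∧ (∀ c ∈ C, wt c = w) ∧
    ∀ c ∈ C, ∀ c' ∈ C, c ≠ c' → d ≤ hammingDist c c'}

/-- `T w₁ n₁ w₂ n₂ d` is the maximum size of a doubly constant weight binary code of
length `n₁+n₂` and minimum distance at least `d`, in which every codeword has exactly
`w₁` ones among its first `n₁` coordinates and exactly `w₂` ones among its last `n₂`
coordinates. -/
noncomputable def T (w₁ n₁ w₂ n₂ d : ℕ) : ℕ :=
  sSup {m | ∃ C : Finset (Fin (n₁ + n₂) → Bool), C.card = m ∧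
    (∀ c ∈ C, (Finset.univ.filter (fun i : Fin (n₁ + n₂) => i.val < n₁ ∧ c i = true)).card = w₁ ∧
      (Finset.univ.filter (fun i : Fin (n₁ + n₂) => n₁ ≤ i.val ∧ c i = true)).card = w₂) ∧
    ∀ c ∈ C, ∀ c' ∈ C, c ≠ c' → d ≤ hammingDist c c'}

/-!
Averaging over the symmetric group. Let `C` be an optimal constant weight code and `D` the set
of words with `w₁` ones in the first block and `w₂` ones in the second. For every permutation
`σ`, the words of `σ • C` lying in `D` form a doubly constant weight code, so there are at most
`T` of them. On the other hand `S_n` acts transitively on the `C(n, w)` words of weight `w`, so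
each codeword is moved into `D` by exactly `|D| · n! / C(n, w)` permutations. Summing over `σ`
gives `|C| · |D| · n! / C(n, w) ≤ n! · T`, and `|D| = C(n₁, w₁) · C(n₂, w₂)`.
-/

open Finset MulAction Equiv

-- `Perm α` acts on words `α → β` by permuting coordinates: `(σ • c) i = c (σ⁻¹ i)`.
attribute [local instance] arrowAction

theorem Finset.bddAbove_card_setOf {α : Type*} [Fintype α] (P : Finset α → Prop) :
    BddAbove {m | ∃ C : Finset α, #C = m ∧ P C} :=
  ⟨Fintype.card α, by rintro _ ⟨C, rfl, -⟩; exact card_le_univ C⟩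

theorem Finset.card_le_sSup_card {α : Type*} [Fintype α] {P : Finset α → Prop} {C : Finset α}
    (hC : P C) : #C ≤ sSup {m | ∃ C : Finset α, #C = m ∧ P C} :=
  le_csSup (bddAbove_card_setOf P) ⟨C, rfl, hC⟩

theorem Finset.exists_card_eq_sSup_card {α : Type*} [Fintype α] {P : Finset α → Prop}
    (h : P ∅) : ∃ C : Finset α, #C = sSup {m | ∃ C : Finset α, #C = m ∧ P C} ∧ P C :=
  Nat.sSup_mem (s := {m | ∃ C : Finset α, #C = m ∧ P C}) ⟨0, ∅, rfl, h⟩ (bddAbove_card_setOf P)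

section Averaging
variable {G X : Type*} [Group G] [MulAction G X] [Fintype G] [DecidableEq X]

theorem card_filter_smul_eq_smul (x : X) (h : G) :
    #{g : G | g • x = h • x} = Nat.card (stabilizer G x) := by
  rw [Nat.card_eq_fintype_card, Fintype.card_subtype]
  refine card_nbij' (h⁻¹ * ·) (h * ·) ?_ ?_ ?_ ?_ <;> intro g hg <;>
    simp_all [mul_smul]

theorem card_filter_smul_mem_mul_ncard_orbit {x : X} {S : Finset X}
    (hS : ∀ s ∈ S, s ∈ orbit G x) :
    #{g : G | g • x ∈ S} * (orbit G x).ncard = #S * Fintype.card G := by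
  have hfiber : ∀ s ∈ S, #{g ∈ ({g | g • x ∈ S} : Finset G) | g • x = s} =
      Nat.card (stabilizer G x) := by
    intro s hs
    obtain ⟨h, rfl⟩ := hS s hs
    rw [filter_filter, ← card_filter_smul_eq_smul x h]
    congr 1
    ext g
    simp only [mem_filter, mem_univ, true_and, and_iff_right_iff_imp]
    exact fun hg => hg ▸ hs
  have hmaps : Set.MapsTo (· • x) (({g : G | g • x ∈ S} : Finset G) : Set G) S :=
    fun g hg => (mem_filter.1 hg).2
  rw [card_eq_sum_card_fiberwise hmaps, sum_congr rfl hfiber, sum_const, smul_eq_mul, mul_assoc,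
    ← index_stabilizer, Subgroup.card_mul_index, Nat.card_eq_fintype_card]

theorem card_mul_card_le_ncard_orbit_mul {x : X} {C S : Finset X}
    (hC : ∀ c ∈ C, c ∈ orbit G x) (hS : ∀ s ∈ S, s ∈ orbit G x) {t : ℕ}
    (ht : ∀ g : G, #{c ∈ C | g • c ∈ S} ≤ t) :
    #C * #S ≤ (orbit G x).ncard * t := by
  have hcount : ∀ c ∈ C, #{g : G | g • c ∈ S} * (orbit G x).ncard = #S * Fintype.card G := by
    intro c hc
    rw [← orbit_eq_iff.2 (hC c hc)]
    exact card_filter_smul_mem_mul_ncard_orbit (by rwa [orbit_eq_iff.2 (hC c hc)])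
  have hdouble : ∑ g : G, #{c ∈ C | g • c ∈ S} = ∑ c ∈ C, #{g : G | g • c ∈ S} := by
    simp only [card_filter]
    exact sum_comm
  refine Nat.le_of_mul_le_mul_right ?_ (Fintype.card_pos (α := G))
  calc #C * #S * Fintype.card G = (∑ c ∈ C, #{g : G | g • c ∈ S}) * (orbit G x).ncard := by
        rw [sum_mul, sum_congr rfl hcount, sum_const, smul_eq_mul, mul_assoc]
    _ = (∑ g : G, #{c ∈ C | g • c ∈ S}) * (orbit G x).ncard := by rw [hdouble]
    _ ≤ (∑ _g : G, t) * (orbit G x).ncard := by gcongr with g; exact ht g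
    _ = (orbit G x).ncard * t * Fintype.card G := by
        rw [sum_const, card_univ, smul_eq_mul]; ring

end Averaging

section Words

theorem hammingDist_perm_smul {α β : Type*} [Fintype α] [DecidableEq β] (σ : Perm α)
    (x y : α → β) : hammingDist (σ • x) (σ • y) = hammingDist x y := by
  simp only [hammingDist, card_filter]
  exact Equiv.sum_comp σ⁻¹ fun i => if x i ≠ y i then 1 else 0

variable {n : ℕ}

theorem wt_perm_smul (σ : Perm (Fin n)) (c : Fin n → Bool) : wt (σ • c) = wt c := by
  simp only [wt, card_filter]
  exact Equiv.sum_comp σ⁻¹ fun i => if c i = true then 1 else 0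

theorem exists_perm_smul_eq_of_wt_eq {c c' : Fin n → Bool} (h : wt c = wt c') :
    ∃ σ : Perm (Fin n), σ • c = c' := by
  have := Set.powersetCard.isPretransitive (α := Fin n) (n := wt c)
  obtain ⟨σ, hσ⟩ := exists_smul_eq (Perm (Fin n))
    (⟨({i | c i = true} : Finset (Fin n)), rfl⟩ : Set.powersetCard (Fin n) (wt c))
    ⟨({i | c' i = true} : Finset (Fin n)), h.symm⟩
  refine ⟨σ, funext fun i => ?_⟩
  have hi := congrArg (i ∈ ·.val) hσ
  simp only [Set.powersetCard.coe_smul, ← Finset.inv_smul_mem_iff] at hi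
  show c (σ⁻¹ • i) = c' i
  simpa [Perm.smul_def] using hi

theorem mem_orbit_perm_iff {c c' : Fin n → Bool} :
    c' ∈ orbit (Perm (Fin n)) c ↔ wt c' = wt c := by
  constructor
  · rintro ⟨σ, rfl⟩
    exact wt_perm_smul σ c
  · intro h
    exact exists_perm_smul_eq_of_wt_eq h.symm

theorem card_filter_wt_eq (n w : ℕ) : #{c : Fin n → Bool | wt c = w} = n.choose w := by
  have hchoose : #(powersetCard w (univ : Finset (Fin n))) = n.choose w := by simp
  rw [← hchoose]
  refine card_nbij' (fun c => ({i | c i = true} : Finset (Fin n))) (fun s i => decide (i ∈ s))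
    ?_ ?_ ?_ ?_
  · intro c hc
    simp only [mem_coe, mem_filter, mem_univ, true_and, mem_powersetCard] at hc ⊢
    exact ⟨subset_univ _, hc⟩
  · intro s hs
    simp only [mem_coe, mem_filter, mem_univ, true_and, mem_powersetCard] at hs ⊢
    simpa [wt] using hs.2
  · intro c _
    funext i
    simp
  · intro s _
    ext i
    simp

theorem ncard_orbit_perm (c : Fin n → Bool) :
    (orbit (Perm (Fin n)) c).ncard = n.choose (wt c) := by
  rw [← card_filter_wt_eq, ← Set.ncard_coe_finset]
  congr 1
  ext c'
  simp [mem_orbit_perm_iff]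

end Words

section Split
variable {n₁ n₂ : ℕ}

theorem card_filter_lt_and_eq_wt_castAdd (c : Fin (n₁ + n₂) → Bool) :
    #{i : Fin (n₁ + n₂) | i.val < n₁ ∧ c i = true} = wt fun i => c (Fin.castAdd n₂ i) := by
  rw [wt, card_filter, card_filter, Fin.sum_univ_add]
  simp

theorem card_filter_le_and_eq_wt_natAdd (c : Fin (n₁ + n₂) → Bool) :
    #{i : Fin (n₁ + n₂) | n₁ ≤ i.val ∧ c i = true} = wt fun i => c (Fin.natAdd n₁ i) := by
  rw [wt, card_filter, card_filter, Fin.sum_univ_add]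
  simp

theorem wt_eq_wt_castAdd_add_wt_natAdd (c : Fin (n₁ + n₂) → Bool) :
    wt c = (wt fun i => c (Fin.castAdd n₂ i)) + wt fun i => c (Fin.natAdd n₁ i) := by
  simp only [wt, card_filter, Fin.sum_univ_add]

variable (n₁ n₂) in
def doublyConstantWords (w₁ w₂ : ℕ) : Finset (Fin (n₁ + n₂) → Bool) :=
  {c | (wt fun i => c (Fin.castAdd n₂ i)) = w₁ ∧ (wt fun i => c (Fin.natAdd n₁ i)) = w₂}

variable (n₁ n₂) in
theorem card_doublyConstantWords (w₁ w₂ : ℕ) :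
    #(doublyConstantWords n₁ n₂ w₁ w₂) = n₁.choose w₁ * n₂.choose w₂ := by
  rw [← card_filter_wt_eq, ← card_filter_wt_eq, ← card_product]
  refine card_nbij' (fun c => (fun i => c (Fin.castAdd n₂ i), fun i => c (Fin.natAdd n₁ i)))
    (fun p => Fin.append p.1 p.2) ?_ ?_ ?_ ?_
  · intro c hc
    simpa [doublyConstantWords] using hc
  · intro p hp
    simpa [doublyConstantWords] using hp
  · intro c _
    exact Fin.append_castAdd_natAdd
  · intro p _
    simp

theorem wt_of_mem_doublyConstantWords {w₁ w₂ : ℕ} {c : Fin (n₁ + n₂) → Bool}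
    (hc : c ∈ doublyConstantWords n₁ n₂ w₁ w₂) : wt c = w₁ + w₂ := by
  rw [doublyConstantWords, mem_filter] at hc
  rw [wt_eq_wt_castAdd_add_wt_natAdd, hc.2.1, hc.2.2]

end Split

theorem exists_code_card_eq_Acw (n d w : ℕ) :
    ∃ C : Finset (Fin n → Bool), #C = Acw n d w ∧ (∀ c ∈ C, wt c = w) ∧
      ∀ c ∈ C, ∀ c' ∈ C, c ≠ c' → d ≤ hammingDist c c' :=
  exists_card_eq_sSup_card ⟨by simp, by simp⟩

theorem card_filter_perm_smul_mem_le_T {n₁ n₂ w₁ w₂ d : ℕ} {C : Finset (Fin (n₁ + n₂) → Bool)}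
    (hC : ∀ c ∈ C, ∀ c' ∈ C, c ≠ c' → d ≤ hammingDist c c') (σ : Perm (Fin (n₁ + n₂))) :
    #{c ∈ C | σ • c ∈ doublyConstantWords n₁ n₂ w₁ w₂} ≤ T w₁ n₁ w₂ n₂ d := by
  rw [← card_image_of_injective _ (MulAction.injective σ)]
  refine card_le_sSup_card ⟨fun c hc => ?_, fun a ha b hb hab => ?_⟩
  · obtain ⟨c, hcC, rfl⟩ := mem_image.1 hc
    have hD := (mem_filter.1 (mem_filter.1 hcC).2).2
    rwa [card_filter_lt_and_eq_wt_castAdd, card_filter_le_and_eq_wt_natAdd]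
  · obtain ⟨a, haC, rfl⟩ := mem_image.1 ha
    obtain ⟨b, hbC, rfl⟩ := mem_image.1 hb
    rw [hammingDist_perm_smul]
    exact hC a (mem_filter.1 haC).1 b (mem_filter.1 hbC).1 (ne_of_apply_ne _ hab)

theorem doubly_constant_weight_bound_general (n₁ n₂ w₁ w₂ d : ℕ) :
    Acw (n₁ + n₂) d (w₁ + w₂) * n₁.choose w₁ * n₂.choose w₂ ≤
      (n₁ + n₂).choose (w₁ + w₂) * T w₁ n₁ w₂ n₂ d := by
  obtain ⟨C, hcard, hwt, hdist⟩ := exists_code_card_eq_Acw (n₁ + n₂) d (w₁ + w₂)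
  rcases C.eq_empty_or_nonempty with rfl | ⟨c₀, hc₀⟩
  · simp [← hcard]
  have hmem : ∀ c, wt c = w₁ + w₂ → c ∈ orbit (Perm (Fin (n₁ + n₂))) c₀ := fun c hc =>
    mem_orbit_perm_iff.2 (hc.trans (hwt c₀ hc₀).symm)
  rw [← hcard, ← hwt c₀ hc₀, ← ncard_orbit_perm, mul_assoc,
    ← card_doublyConstantWords n₁ n₂ w₁ w₂]
  exact card_mul_card_le_ncard_orbit_mul (fun c hc => hmem c (hwt c hc))
    (fun c hc => hmem c (wt_of_mem_doublyConstantWords hc))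
    (card_filter_perm_smul_mem_le_T hdist)

/-- `A(n₁+n₂,d,w₁+w₂) · C(n₁,w₁) · C(n₂,w₂) ≤ C(n₁+n₂,w₁+w₂) · T(w₁,n₁,w₂,n₂,d)`. -/
theorem doubly_constant_weight_bound (n₁ n₂ w₁ w₂ d : ℕ) (hn₁ : 1 ≤ n₁) (hn₂ : 1 ≤ n₂)
    (hw₁ : w₁ ≤ n₁) (hw₂ : w₂ ≤ n₂) (hd : 1 ≤ d) :
    Acw (n₁ + n₂) d (w₁ + w₂) * n₁.choose w₁ * n₂.choose w₂ ≤
      (n₁ + n₂).choose (w₁ + w₂) * T w₁ n₁ w₂ n₂ d :=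
  doubly_constant_weight_bound_general n₁ n₂ w₁ w₂ d
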